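/- arXiv:2001.04851 — 3 statements merged into one kernel-verified Lean document; each statement's English description precedes it below -/
import Mathlib

section
/- Let A be a smooth field of endomorphisms (a (1,1)-tensor) on a manifold Q with vanishing Nijenhuis torsion, and let α be a 1-form such that both α and A*α are closed. Then d(A*²α)(ξ,η) = 0 for all vector fields ξ,η, i.e. (A*)²α is also closed. -/
open Matrix

/-- Lie bracket of vector fields on `ℝ^n` (in coordinates). -/
noncomputable def vbracket {n : ℕ} (ξ η : (Fin n → ℝ) → (Fin n → ℝ))
    (x : Fin n → ℝ) : Fin n → ℝ :=
  fun i => fderiv ℝ (fun y => η y i) x (ξ x) - fderiv ℝ (fun y => ξ y i) x (η x)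

/-- Nijenhuis torsion `N_A(ξ,η) = A²[ξ,η] − A[Aξ,η] − A[ξ,Aη] + [Aξ,Aη]`
of an operator field `A` on `ℝ^n`. -/
noncomputable def nijTorsion {n : ℕ} (A : (Fin n → ℝ) → Matrix (Fin n) (Fin n) ℝ)
    (ξ η : (Fin n → ℝ) → (Fin n → ℝ)) (x : Fin n → ℝ) : Fin n → ℝ :=
  (A x * A x).mulVec (vbracket ξ η x)
    - (A x).mulVec (vbracket (fun y => (A y).mulVec (ξ y)) η x)
    - (A x).mulVec (vbracket ξ (fun y => (A y).mulVec (η y)) x)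
    + vbracket (fun y => (A y).mulVec (ξ y)) (fun y => (A y).mulVec (η y)) x

/-- Exterior derivative of a 1-form `α` (components `α i`), evaluated on a pair
of vector fields: `dα(ξ,η) = ξ(α(η)) − η(α(ξ)) − α([ξ,η])`. -/
noncomputable def dOneForm {n : ℕ} (α : (Fin n → ℝ) → (Fin n → ℝ))
    (ξ η : (Fin n → ℝ) → (Fin n → ℝ)) (x : Fin n → ℝ) : ℝ :=
  fderiv ℝ (fun y => α y ⬝ᵥ η y) x (ξ x) - fderiv ℝ (fun y => α y ⬝ᵥ ξ y) x (η x)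
    - α x ⬝ᵥ vbracket ξ η x

/-- Pullback action of an operator field on 1-forms: `(A*α)(ξ) = α(Aξ)`. -/
def pullbackForm {n : ℕ} (A : (Fin n → ℝ) → Matrix (Fin n) (Fin n) ℝ)
    (α : (Fin n → ℝ) → (Fin n → ℝ)) : (Fin n → ℝ) → (Fin n → ℝ) :=
  fun x => (A x)ᵀ.mulVec (α x)

lemma smoothMulVec {n : ℕ} (A : (Fin n → ℝ) → Matrix (Fin n) (Fin n) ℝ)
    (hA : ∀ i j : Fin n, ContDiff ℝ (⊤ : ℕ∞) (fun x => A x i j))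
    (ξ : (Fin n → ℝ) → (Fin n → ℝ)) (hξ : ContDiff ℝ (⊤ : ℕ∞) ξ) :
    ContDiff ℝ (⊤ : ℕ∞) (fun y => (A y).mulVec (ξ y)) := by
  rw [contDiff_pi]
  intro i
  simp only [Matrix.mulVec, dotProduct]
  exact ContDiff.sum fun j _ => (hA i j).mul (contDiff_pi.1 hξ j)

lemma pf_dot {n : ℕ} (A : (Fin n → ℝ) → Matrix (Fin n) (Fin n) ℝ)
    (β : (Fin n → ℝ) → (Fin n → ℝ)) (x : Fin n → ℝ) (v : Fin n → ℝ) :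
    pullbackForm A β x ⬝ᵥ v = β x ⬝ᵥ (A x).mulVec v := by
  rw [pullbackForm, Matrix.mulVec_transpose, Matrix.dotProduct_mulVec]

theorem stmt11 {n : ℕ} (A : (Fin n → ℝ) → Matrix (Fin n) (Fin n) ℝ)
    (hA : ∀ i j : Fin n, ContDiff ℝ (⊤ : ℕ∞) (fun x => A x i j))
    (hNij : ∀ ξ η : (Fin n → ℝ) → (Fin n → ℝ), ContDiff ℝ (⊤ : ℕ∞) ξ → ContDiff ℝ (⊤ : ℕ∞) η →
      ∀ x, nijTorsion A ξ η x = 0)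
    (α : (Fin n → ℝ) → (Fin n → ℝ)) (hα : ContDiff ℝ (⊤ : ℕ∞) α)
    (hclosed : ∀ ξ η : (Fin n → ℝ) → (Fin n → ℝ), ContDiff ℝ (⊤ : ℕ∞) ξ → ContDiff ℝ (⊤ : ℕ∞) η →
      ∀ x, dOneForm α ξ η x = 0)
    (hclosedA : ∀ ξ η : (Fin n → ℝ) → (Fin n → ℝ), ContDiff ℝ (⊤ : ℕ∞) ξ → ContDiff ℝ (⊤ : ℕ∞) η →
      ∀ x, dOneForm (pullbackForm A α) ξ η x = 0) :
    ∀ ξ η : (Fin n → ℝ) → (Fin n → ℝ), ContDiff ℝ (⊤ : ℕ∞) ξ → ContDiff ℝ (⊤ : ℕ∞) η →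
      ∀ x, dOneForm (pullbackForm A (pullbackForm A α)) ξ η x = 0 := by
  intro ξ η hξ hη x
  have hAξ := smoothMulVec A hA ξ hξ
  have hAη := smoothMulVec A hA η hη
  have h1 := hclosed _ _ hAξ hAη x
  have h2 := hclosedA _ _ hAξ hη x
  have h3 := hclosedA _ _ hξ hAη x
  have hN := congrArg (fun v => α x ⬝ᵥ v) (hNij ξ η hξ hη x)
  simp only [nijTorsion, ← Matrix.mulVec_mulVec, dotProduct_add,
    dotProduct_sub, dotProduct_zero] at hN
  simp only [dOneForm, pf_dot] at h1 h2 h3 ⊢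
  linarith
end

section
/- For a Nijenhuis (1,1)-tensor field A on a manifold Q, the identity (1/k) d tr(A^k) = (1/(k−1)) A* d tr(A^{k−1}) holds for all k ≥ 2; equivalently d tr(A^k) evaluated on a vector ξ equals (k/(k−1)) d tr(A^{k−1}) evaluated on Aξ. -/
open Matrix

namespace Stmt16Aux

variable {n : ℕ}

/-- Formal derivative of the matrix power map. -/
noncomputable def dPow' (M P : Matrix (Fin n) (Fin n) ℝ) : ℕ → Matrix (Fin n) (Fin n) ℝ
  | 0 => 0
  | m + 1 => dPow' M P m * M + M ^ m * P

lemma trace_mul_eq_sum (X Y : Matrix (Fin n) (Fin n) ℝ) :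
    (X * Y).trace = ∑ a, ∑ j, X a j * Y j a := by
  simp [Matrix.trace, Matrix.diag, Matrix.mul_apply]

lemma trace_pow_mul_dPow (M P : Matrix (Fin n) (Fin n) ℝ) (m : ℕ) : ∀ q,
    (M ^ q * dPow' M P (m + 1)).trace = (m + 1 : ℝ) * (M ^ (q + m) * P).trace := by
  induction m with
  | zero => intro q; simp [dPow']
  | succ m ih =>
      intro q
      rw [show dPow' M P (m+2) = dPow' M P (m+1) * M + M ^ (m+1) * P from rfl,
        Matrix.mul_add, Matrix.trace_add]
      have h1 : (M ^ q * (dPow' M P (m+1) * M)).trace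
          = (M ^ (q+1) * dPow' M P (m+1)).trace := by
        rw [← Matrix.mul_assoc, Matrix.trace_mul_comm, ← Matrix.mul_assoc, ← pow_succ']
      have h2 : (M ^ q * (M ^ (m+1) * P)).trace = (M ^ (q + (m+1)) * P).trace := by
        rw [← Matrix.mul_assoc, ← pow_add]
      rw [h1, h2, ih (q+1)]
      have h3 : q + 1 + m = q + (m + 1) := by omega
      rw [h3]; push_cast; ring

lemma clm_apply_eq_sum (L : (Fin n → ℝ) →L[ℝ] ℝ) (v : Fin n → ℝ) :
    L v = ∑ s, v s * L (Pi.single s 1) := by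
  conv_lhs => rw [← Finset.univ_sum_single v]
  rw [map_sum]
  refine Finset.sum_congr rfl fun s _ => ?_
  have h : (Pi.single s (v s) : Fin n → ℝ) = v s • (Pi.single s (1:ℝ) : Fin n → ℝ) := by
    rw [← Pi.single_smul, smul_eq_mul, mul_one]
  rw [h, L.map_smul, smul_eq_mul]

lemma sumL1 (M : Matrix (Fin n) (Fin n) ℝ) (p : ℕ) (R : Fin n → Fin n → ℝ) :
    ∑ a, ∑ i, (M ^ p) a i * (∑ j, M i j * R a j)
      = ∑ a, ∑ j, (M ^ (p+1)) a j * R a j := by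
  refine Finset.sum_congr rfl fun a _ => ?_
  calc ∑ i, (M^p) a i * (∑ j, M i j * R a j)
      = ∑ i, ∑ j, (M^p) a i * M i j * R a j := by
        refine Finset.sum_congr rfl fun i _ => ?_
        rw [Finset.mul_sum]
        exact Finset.sum_congr rfl fun j _ => by ring
    _ = ∑ j, ∑ i, (M^p) a i * M i j * R a j := Finset.sum_comm
    _ = ∑ j, (M^(p+1)) a j * R a j := by
        refine Finset.sum_congr rfl fun j _ => ?_
        rw [pow_succ, Matrix.mul_apply, Finset.sum_mul]

lemma sumL2 (M : Matrix (Fin n) (Fin n) ℝ) (p : ℕ) (S : Fin n → Fin n → ℝ) :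
    ∑ a, ∑ i, (M ^ p) a i * (∑ s, M s a * S s i)
      = ∑ a, ∑ j, (M ^ (p+1)) a j * S a j := by
  calc ∑ a, ∑ i, (M ^ p) a i * (∑ s, M s a * S s i)
      = ∑ a, ∑ s, ∑ i, (M^p) a i * M s a * S s i := by
        refine Finset.sum_congr rfl fun a _ => ?_
        calc ∑ i, (M^p) a i * (∑ s, M s a * S s i)
            = ∑ i, ∑ s, (M^p) a i * M s a * S s i := by
              refine Finset.sum_congr rfl fun i _ => ?_
              rw [Finset.mul_sum]
              exact Finset.sum_congr rfl fun s _ => by ring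
          _ = ∑ s, ∑ i, (M^p) a i * M s a * S s i := Finset.sum_comm
    _ = ∑ s, ∑ a, ∑ i, (M^p) a i * M s a * S s i := Finset.sum_comm
    _ = ∑ s, ∑ i, (M^(p+1)) s i * S s i := by
        refine Finset.sum_congr rfl fun s _ => ?_
        calc ∑ a, ∑ i, (M^p) a i * M s a * S s i
            = ∑ i, ∑ a, (M^p) a i * M s a * S s i := Finset.sum_comm
          _ = ∑ i, (M^(p+1)) s i * S s i := by
              refine Finset.sum_congr rfl fun i _ => ?_
              rw [pow_succ', Matrix.mul_apply, Finset.sum_mul]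
              exact Finset.sum_congr rfl fun a _ => by ring

lemma sumL3 (M : Matrix (Fin n) (Fin n) ℝ) (p : ℕ) (c : Fin n → ℝ)
    (T : Fin n → Matrix (Fin n) (Fin n) ℝ) :
    ∑ a, ∑ i, (M ^ p) a i * (∑ s, c s * T s i a) = ∑ s, c s * (M ^ p * T s).trace := by
  calc ∑ a, ∑ i, (M ^ p) a i * (∑ s, c s * T s i a)
      = ∑ a, ∑ s, ∑ i, (M^p) a i * (c s * T s i a) := by
        refine Finset.sum_congr rfl fun a _ => ?_
        calc ∑ i, (M^p) a i * (∑ s, c s * T s i a)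
            = ∑ i, ∑ s, (M^p) a i * (c s * T s i a) := by
              refine Finset.sum_congr rfl fun i _ => ?_
              rw [Finset.mul_sum]
          _ = ∑ s, ∑ i, (M^p) a i * (c s * T s i a) := Finset.sum_comm
    _ = ∑ s, ∑ a, ∑ i, (M^p) a i * (c s * T s i a) := Finset.sum_comm
    _ = ∑ s, c s * (M ^ p * T s).trace := by
        refine Finset.sum_congr rfl fun s _ => ?_
        rw [trace_mul_eq_sum, Finset.mul_sum]
        refine Finset.sum_congr rfl fun a _ => ?_
        rw [Finset.mul_sum]
        exact Finset.sum_congr rfl fun i _ => by ring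

lemma contDiff_pow_entry (A : (Fin n → ℝ) → Matrix (Fin n) (Fin n) ℝ)
    (hA : ∀ i j, ContDiff ℝ (⊤ : ℕ∞) fun x => A x i j) (m : ℕ) :
    ∀ i j, ContDiff ℝ (⊤ : ℕ∞) fun y => ((A y) ^ m) i j := by
  induction m with
  | zero =>
      intro i j
      simp only [pow_zero]
      exact contDiff_const
  | succ m ih =>
      intro i j
      have h : (fun y => ((A y) ^ (m+1)) i j) = fun y => ∑ l, ((A y) ^ m) i l * A y l j := by
        funext y; rw [pow_succ, Matrix.mul_apply]
      rw [h]
      exact ContDiff.sum fun l _ => (ih i l).mul (hA l j)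

lemma fderiv_pow_entry (A : (Fin n → ℝ) → Matrix (Fin n) (Fin n) ℝ)
    (hA : ∀ i j, ContDiff ℝ (⊤ : ℕ∞) fun x => A x i j) (x ξ : Fin n → ℝ) (m : ℕ) :
    ∀ i j, fderiv ℝ (fun y => ((A y) ^ m) i j) x ξ
      = dPow' (A x) (Matrix.of fun i j => fderiv ℝ (fun y => A y i j) x ξ) m i j := by
  induction m with
  | zero =>
      intro i j
      simp only [pow_zero, dPow']
      simp
  | succ m ih =>
      intro i j
      have hfun : (fun y => ((A y) ^ (m+1)) i j) = fun y => ∑ l, ((A y) ^ m) i l * A y l j := by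
        funext y; rw [pow_succ, Matrix.mul_apply]
      have hd1 : ∀ (i l : Fin n), DifferentiableAt ℝ (fun y => ((A y) ^ m) i l) x :=
        fun i l => ((contDiff_pow_entry A hA m i l).differentiable (by simp)).differentiableAt
      have hd2 : ∀ (l j : Fin n), DifferentiableAt ℝ (fun y => A y l j) x :=
        fun l j => ((hA l j).differentiable (by simp)).differentiableAt
      rw [hfun, fderiv_fun_sum (fun l _ => (show DifferentiableAt ℝ (fun y => ((A y)^m) i l * A y l j) x
          from (hd1 i l).mul (hd2 l j))),
        ContinuousLinearMap.sum_apply]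
      have hterm : ∀ l : Fin n, fderiv ℝ (fun y => ((A y)^m) i l * A y l j) x ξ
          = ((A x)^m) i l * fderiv ℝ (fun y => A y l j) x ξ
            + A x l j * fderiv ℝ (fun y => ((A y)^m) i l) x ξ := by
        intro l
        rw [fderiv_fun_mul (hd1 i l) (hd2 l j)]
        simp [smul_eq_mul]
      rw [Finset.sum_congr rfl fun l _ => hterm l]
      simp only [ih]
      rw [show dPow' (A x) (Matrix.of fun i j => fderiv ℝ (fun y => A y i j) x ξ) (m+1)
          = dPow' (A x) (Matrix.of fun i j => fderiv ℝ (fun y => A y i j) x ξ) m * A x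
            + (A x) ^ m * (Matrix.of fun i j => fderiv ℝ (fun y => A y i j) x ξ) from rfl]
      rw [Matrix.add_apply, Matrix.mul_apply, Matrix.mul_apply, Finset.sum_add_distrib]
      rw [add_comm]
      congr 1
      exact Finset.sum_congr rfl fun l _ => by rw [mul_comm]

lemma fderiv_trace_pow (A : (Fin n → ℝ) → Matrix (Fin n) (Fin n) ℝ)
    (hA : ∀ i j, ContDiff ℝ (⊤ : ℕ∞) fun x => A x i j) (x ξ : Fin n → ℝ) (m : ℕ) :
    fderiv ℝ (fun y => ((A y) ^ (m+1)).trace) x ξ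
      = (m + 1 : ℝ)
          * ((A x) ^ m * Matrix.of fun i j => fderiv ℝ (fun y => A y i j) x ξ).trace := by
  have hfun : (fun y => ((A y) ^ (m+1)).trace) = fun y => ∑ i, ((A y)^(m+1)) i i := by
    funext y; simp [Matrix.trace, Matrix.diag]
  rw [hfun, fderiv_fun_sum (fun i _ =>
      ((contDiff_pow_entry A hA (m+1) i i).differentiable (by simp)).differentiableAt),
    ContinuousLinearMap.sum_apply]
  rw [Finset.sum_congr rfl fun i _ => fderiv_pow_entry A hA x ξ (m+1) i i]
  have h := trace_pow_mul_dPow (A x) (Matrix.of fun i j => fderiv ℝ (fun y => A y i j) x ξ) m 0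
  simp only [pow_zero, Matrix.one_mul, Nat.zero_add] at h
  simpa [Matrix.trace, Matrix.diag] using h

end Stmt16Aux

/-- for a Nijenhuis operator field `A`,
`(1/k)·d tr(A^k) = (1/(k−1))·A* d tr(A^{k−1})` for all `k ≥ 2`; i.e.
`(1/k)·d tr(A^k)(ξ) = (1/(k−1))·d tr(A^{k−1})(Aξ)` for every tangent
vector `ξ`. -/
theorem stmt16 {n : ℕ} (A : (Fin n → ℝ) → Matrix (Fin n) (Fin n) ℝ)
    (hA : ∀ i j : Fin n, ContDiff ℝ (⊤ : ℕ∞) (fun x => A x i j))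
    (hNij : ∀ ξ η : (Fin n → ℝ) → (Fin n → ℝ), ContDiff ℝ (⊤ : ℕ∞) ξ → ContDiff ℝ (⊤ : ℕ∞) η →
      ∀ x, nijTorsion A ξ η x = 0) :
    ∀ k : ℕ, 2 ≤ k → ∀ (x ξ : Fin n → ℝ),
      (1 / (k : ℝ)) * fderiv ℝ (fun y => ((A y) ^ k).trace) x ξ =
        (1 / ((k : ℝ) - 1)) *
          fderiv ℝ (fun y => ((A y) ^ (k - 1)).trace) x ((A x).mulVec ξ) := by
  intro k hk x ξ
  obtain ⟨m, rfl⟩ : ∃ m, k = m + 2 := ⟨k - 2, by omega⟩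
  classical
  let P : (Fin n → ℝ) → Matrix (Fin n) (Fin n) ℝ :=
    fun v => Matrix.of fun i j => fderiv ℝ (fun y => A y i j) x v
  have hPapp : ∀ (v : Fin n → ℝ) (i j : Fin n),
      P v i j = fderiv ℝ (fun y => A y i j) x v := fun _ _ _ => rfl
  have hmv : ∀ (c i : Fin n), (fun y => ((A y).mulVec (Pi.single c (1:ℝ))) i)
      = fun y => A y i c := by
    intro c i; funext y; simp [Matrix.mulVec_single]
  have hcol : ∀ (c s : Fin n), ((A x).mulVec (Pi.single c (1:ℝ))) s = A x s c := by
    intro c s; simp [Matrix.mulVec_single]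
  -- the Nijenhuis condition in coordinates
  have star : ∀ a b i : Fin n,
      (∑ j, A x i j * P (Pi.single b 1) j a)
        - (∑ j, A x i j * P (Pi.single a 1) j b)
        + P ((A x).mulVec (Pi.single a 1)) i b
        - P ((A x).mulVec (Pi.single b 1)) i a = 0 := by
    intro a b i
    simp only [hPapp]
    have h := congrFun (hNij (fun _ => Pi.single a 1) (fun _ => Pi.single b 1)
      contDiff_const contDiff_const x) i
    simp only [nijTorsion, vbracket, Pi.sub_apply, Pi.add_apply, Pi.zero_apply] at h
    simp only [hmv] at h
    simp only [fderiv_fun_const, Pi.zero_apply, ContinuousLinearMap.zero_apply, zero_sub, sub_zero,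
      Matrix.mulVec_neg, Pi.neg_apply, Matrix.mulVec, dotProduct] at h
    simp only [vbracket, hmv, fderiv_fun_const, Pi.zero_apply, ContinuousLinearMap.zero_apply,
      zero_sub, sub_zero, mul_zero, mul_neg, Finset.sum_const_zero,
      Finset.sum_neg_distrib] at h
    linarith [h]
  have expand : ∀ (v : Fin n → ℝ) (i c : Fin n),
      P v i c = ∑ s, v s * P (Pi.single s 1) i c := by
    intro v i c
    exact Stmt16Aux.clm_apply_eq_sum (fderiv ℝ (fun y => A y i c) x) v
  -- key contraction identity
  have key : ∀ (p : ℕ) (b : Fin n),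
      ((A x) ^ (p+1) * P (Pi.single b 1)).trace
        = ∑ s, A x s b * ((A x) ^ p * P (Pi.single s 1)).trace := by
    intro p b
    have inner : ∀ a i : Fin n,
        (∑ j, A x i j * P (Pi.single b 1) j a)
          = (∑ j, A x i j * P (Pi.single a 1) j b)
            - (∑ s, A x s a * P (Pi.single s 1) i b)
            + (∑ s, A x s b * P (Pi.single s 1) i a) := by
      intro a i
      have h1 := star a b i
      have e1 := expand ((A x).mulVec (Pi.single a 1)) i b
      have e2 := expand ((A x).mulVec (Pi.single b 1)) i a
      simp only [hcol] at e1 e2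
      linarith [h1, e1, e2]
    calc ((A x) ^ (p+1) * P (Pi.single b 1)).trace
        = ∑ a, ∑ j, ((A x)^(p+1)) a j * P (Pi.single b 1) j a :=
          Stmt16Aux.trace_mul_eq_sum _ _
      _ = ∑ a, ∑ i, ((A x)^p) a i * (∑ j, A x i j * P (Pi.single b 1) j a) :=
          (Stmt16Aux.sumL1 (A x) p _).symm
      _ = ∑ a, ∑ i, ((A x)^p) a i *
            ((∑ j, A x i j * P (Pi.single a 1) j b)
              - (∑ s, A x s a * P (Pi.single s 1) i b)
              + (∑ s, A x s b * P (Pi.single s 1) i a)) :=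
          Finset.sum_congr rfl fun a _ => Finset.sum_congr rfl fun i _ => by rw [inner a i]
      _ = (∑ a, ∑ i, ((A x)^p) a i * (∑ j, A x i j * P (Pi.single a 1) j b))
            - (∑ a, ∑ i, ((A x)^p) a i * (∑ s, A x s a * P (Pi.single s 1) i b))
            + (∑ a, ∑ i, ((A x)^p) a i * (∑ s, A x s b * P (Pi.single s 1) i a)) := by
          simp only [mul_sub, mul_add, Finset.sum_sub_distrib, Finset.sum_add_distrib]
      _ = ∑ s, A x s b * ((A x) ^ p * P (Pi.single s 1)).trace := by
          rw [Stmt16Aux.sumL1 (A x) p (fun a j => P (Pi.single a 1) j b),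
            Stmt16Aux.sumL2 (A x) p (fun s i => P (Pi.single s 1) i b),
            Stmt16Aux.sumL3 (A x) p (fun s => A x s b) (fun s => P (Pi.single s 1))]
          ring
  -- linearity of `v ↦ trace (M^q * P v)`
  have lin : ∀ (q : ℕ) (v : Fin n → ℝ),
      ((A x) ^ q * P v).trace = ∑ b, v b * ((A x) ^ q * P (Pi.single b 1)).trace := by
    intro q v
    rw [Stmt16Aux.trace_mul_eq_sum]
    rw [Finset.sum_congr rfl fun a _ => Finset.sum_congr rfl fun j _ => by rw [expand v j a]]
    exact Stmt16Aux.sumL3 (A x) q v (fun s => P (Pi.single s 1))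
  have keyv : ((A x) ^ (m+1) * P ξ).trace = ((A x) ^ m * P ((A x).mulVec ξ)).trace := by
    rw [lin (m+1) ξ, lin m ((A x).mulVec ξ)]
    rw [Finset.sum_congr rfl fun b _ => by rw [key m b]]
    have hmulvec : ∀ s, ((A x).mulVec ξ) s = ∑ b, A x s b * ξ b := by
      intro s; simp [Matrix.mulVec, dotProduct]
    simp only [hmulvec]
    calc ∑ b, ξ b * ∑ s, A x s b * ((A x) ^ m * P (Pi.single s 1)).trace
        = ∑ b, ∑ s, ξ b * (A x s b * ((A x) ^ m * P (Pi.single s 1)).trace) := by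
          exact Finset.sum_congr rfl fun b _ => by rw [Finset.mul_sum]
      _ = ∑ s, ∑ b, ξ b * (A x s b * ((A x) ^ m * P (Pi.single s 1)).trace) :=
          Finset.sum_comm
      _ = ∑ s, (∑ b, A x s b * ξ b) * ((A x) ^ m * P (Pi.single s 1)).trace := by
          refine Finset.sum_congr rfl fun s _ => ?_
          rw [Finset.sum_mul]
          exact Finset.sum_congr rfl fun b _ => by ring
  have d1 : fderiv ℝ (fun y => ((A y) ^ (m+2)).trace) x ξ
      = ((m:ℝ) + 1 + 1) * ((A x) ^ (m+1) * P ξ).trace := by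
    have := Stmt16Aux.fderiv_trace_pow A hA x ξ (m+1)
    push_cast at this ⊢
    exact this
  have d2 : fderiv ℝ (fun y => ((A y) ^ (m+2-1)).trace) x ((A x).mulVec ξ)
      = ((m:ℝ) + 1) * ((A x) ^ m * P ((A x).mulVec ξ)).trace :=
    Stmt16Aux.fderiv_trace_pow A hA x ((A x).mulVec ξ) m
  rw [d1, d2, ← keyv]
  have h2 : ((m:ℝ) + 2) ≠ 0 := by positivity
  have h1 : ((m:ℝ) + 1) ≠ 0 := by positivity
  push_cast
  rw [show ((m:ℝ) + 2 - 1) = (m:ℝ) + 1 from by ring]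
  field_simp
  ring
end

section
/- Let A be the operator field on ℝ^n (coordinates x₁,...,x_n) in first companion form with σ_i = x_i: first column −(x₁,...,x_n)^T, ones on the superdiagonal. Then A is a Nijenhuis operator (its Nijenhuis torsion vanishes identically), and its characteristic polynomial at the point x is t^n + x₁ t^{n−1} + ... + x_n. -/
open Matrix Polynomial

/-- Partial derivative `∂f/∂x_k` at `x`. -/
noncomputable def pd {n : ℕ} (k : Fin n) (f : (Fin n → ℝ) → ℝ) (x : Fin n → ℝ) : ℝ :=
  fderiv ℝ f x (Pi.single k 1)

/-- The operator field on `ℝ^n` in first companion form with `σ_i = x_i`: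
first column `−(x₁,…,x_n)ᵀ`, ones on the superdiagonal. -/
def Acomp (n : ℕ) (x : Fin n → ℝ) : Matrix (Fin n) (Fin n) ℝ :=
  fun i j => if (j : ℕ) = (i : ℕ) + 1 then 1
    else if (j : ℕ) = 0 then -(x i) else 0

/-! The entries of `A(x)` are affine in `x` with `∂_k A^i_m = δ^i_k c_m`, where `c_m = -δ_{m1}`.
For any operator field with derivatives of this shape the four terms of the torsion cancel in
pairs: the first and third both equal `c_m A^i_j`, the second and fourth both equal `c_j A^i_m`.
The characteristic polynomial follows by induction on `n`, expanding `det (t - A)` along the last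
row: the minor of the diagonal entry is the same matrix one size smaller, and the minor of the
first entry is triangular with all diagonal entries `-1`. -/

section Companion

variable {R : Type*} [CommRing R]

-- `Acomp` over an arbitrary commutative ring: `Acomp n = companion` holds by `rfl`.
def companion {n : ℕ} (a : Fin n → R) : Matrix (Fin n) (Fin n) R :=
  fun i j => if (j : ℕ) = (i : ℕ) + 1 then 1 else if (j : ℕ) = 0 then -(a i) else 0

lemma companion_apply_eq_add {n : ℕ} (a : Fin n → R) (i j : Fin n) :
    companion a i j = companion 0 i j + (if (j : ℕ) = 0 then -1 else 0) * a i := by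
  unfold companion
  split_ifs <;> simp_all

lemma charmatrix_companion_last_apply {n : ℕ} (a : Fin (n + 1) → R) (j : Fin (n + 1)) :
    charmatrix (companion a) (Fin.last n) j
      = (if j = Fin.last n then X else 0) + (if j = 0 then C (a (Fin.last n)) else 0) := by
  simp only [charmatrix_apply, diagonal_apply, companion, Fin.ext_iff, Fin.val_last, Fin.val_zero]
  split_ifs <;> first | omega | simp

lemma charmatrix_companion_submatrix_castSucc {n : ℕ} (a : Fin (n + 1) → R) :
    (charmatrix (companion a)).submatrix Fin.castSucc Fin.castSucc
      = charmatrix (companion (a ∘ Fin.castSucc)) := by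
  ext i j : 1
  simp [charmatrix_apply, diagonal_apply, companion]

lemma det_charmatrix_companion_submatrix_castSucc_succ {n : ℕ} (a : Fin (n + 1) → R) :
    ((charmatrix (companion a)).submatrix Fin.castSucc Fin.succ).det = (-1) ^ n := by
  rw [det_of_isLowerTriangular]
  · simp [companion, Fin.ext_iff]
  · intro i j (hij : i < j)
    have hsub : (i : ℕ) ≠ j + 1 := by omega
    have hsup : (j : ℕ) ≠ i := by omega
    simp [companion, Fin.ext_iff, hsub, hsup]

theorem charpoly_companion {n : ℕ} (a : Fin n → R) :
    (companion a).charpoly = X ^ n + ∑ i : Fin n, C (a i) * X ^ (n - 1 - (i : ℕ)) := by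
  induction n with
  | zero => simp [charpoly]
  | succ n ih =>
    rw [charpoly, det_succ_row _ (Fin.last n)]
    simp only [charmatrix_companion_last_apply, mul_add, add_mul, mul_ite, ite_mul, mul_zero,
      zero_mul, Finset.sum_add_distrib, Finset.sum_ite_eq', Finset.mem_univ, if_true,
      Fin.succAbove_last, Fin.succAbove_zero, charmatrix_companion_submatrix_castSucc,
      det_charmatrix_companion_submatrix_castSucc_succ]
    rw [← charpoly, ih, Fin.sum_univ_castSucc]
    have hsign : (-1 : R[X]) ^ (n + n) = 1 := (Even.add_self n).neg_one_pow
    have hshift : X * ∑ i : Fin n, C (a i.castSucc) * X ^ (n - 1 - (i : ℕ))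
        = ∑ i : Fin n, C (a i.castSucc) * X ^ (n - (i : ℕ)) := by
      rw [Finset.mul_sum]
      refine Finset.sum_congr rfl fun i _ => ?_
      rw [show n - (i : ℕ) = n - 1 - i + 1 by omega, pow_succ]
      ring
    simp only [Fin.val_last, Fin.val_zero, Fin.val_castSucc, Function.comp_apply, add_zero, hsign,
      Nat.add_sub_cancel, Nat.sub_self, pow_zero, one_mul, mul_add, hshift]
    linear_combination C (a (Fin.last n)) * hsign

end Companion

section Nijenhuis

variable {n : ℕ}

noncomputable def nijenhuisTorsion (A : (Fin n → ℝ) → Matrix (Fin n) (Fin n) ℝ)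
    (x : Fin n → ℝ) (i j m : Fin n) : ℝ :=
  ∑ k : Fin n,
    (A x k j * pd k (fun y => A y i m) x - A x k m * pd k (fun y => A y i j) x
      - A x i k * pd j (fun y => A y k m) x + A x i k * pd m (fun y => A y k j) x)

lemma nijenhuisTorsion_eq_zero_of_pd_eq (A : (Fin n → ℝ) → Matrix (Fin n) (Fin n) ℝ)
    (x : Fin n → ℝ) (c : Fin n → ℝ)
    (hA : ∀ k i m, pd k (fun y => A y i m) x = if i = k then c m else 0) (i j m : Fin n) :
    nijenhuisTorsion A x i j m = 0 := by
  simp only [nijenhuisTorsion, hA, mul_ite, mul_zero, Finset.sum_add_distrib,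
    Finset.sum_sub_distrib, Finset.sum_ite_eq, Finset.sum_ite_eq', Finset.mem_univ, if_true]
  ring

lemma pd_const_add_mul_apply (k i : Fin n) (a b : ℝ) (x : Fin n → ℝ) :
    pd k (fun y => a + b * y i) x = if i = k then b else 0 := by
  have hderiv : HasFDerivAt (fun y : Fin n → ℝ => a + b * y i)
      (b • ContinuousLinearMap.proj i) x :=
    ((hasFDerivAt_apply (𝕜 := ℝ) i x).const_mul b).const_add a
  simp [pd, hderiv.fderiv, Pi.single_apply]

lemma pd_companion_apply (k i m : Fin n) (x : Fin n → ℝ) :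
    pd k (fun y => companion y i m) x = if i = k then (if (m : ℕ) = 0 then -1 else 0) else 0 := by
  rw [funext fun y => companion_apply_eq_add y i m]
  exact pd_const_add_mul_apply k i _ _ x

end Nijenhuis

/-- the first companion operator field `A(x)` with `σ_i = x_i`
is Nijenhuis (its Nijenhuis torsion, in the coordinate formula, vanishes
identically), and its characteristic polynomial at `x` is
`t^n + x₁ t^{n−1} + ⋯ + x_n`. -/
theorem stmt17 (n : ℕ) :
    (∀ (x : Fin n → ℝ) (i j m : Fin n),
      ∑ k : Fin n,
        (Acomp n x k j * pd k (fun y => Acomp n y i m) x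
          - Acomp n x k m * pd k (fun y => Acomp n y i j) x
          - Acomp n x i k * pd j (fun y => Acomp n y k m) x
          + Acomp n x i k * pd m (fun y => Acomp n y k j) x) = 0) ∧
    (∀ x : Fin n → ℝ,
      (Acomp n x).charpoly =
        X ^ n + ∑ i : Fin n, C (x i) * X ^ (n - 1 - (i : ℕ))) :=
  ⟨fun x => nijenhuisTorsion_eq_zero_of_pd_eq (Acomp n) x _ fun k i m =>
      pd_companion_apply k i m x,
    charpoly_companion⟩
end
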